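/- A term β-equivalent to a term in head normal form is solvable: if t ≃_β h and h is in head normal form, then the head reduction of t terminates. -/

import Mathlib

inductive Lam : Type
  | var : ℕ → Lam
  | app : Lam → Lam → Lam
  | lam : Lam → Lam
deriving DecidableEq

namespace Lam

/-- Lift (shift up by one) all de Bruijn indices ≥ d. -/
def lift (d : ℕ) : Lam → Lam
  | var n => if n < d then var n else var (n + 1)
  | app u v => app (lift d u) (lift d v)
  | lam u => lam (lift (d + 1) u)

/-- Capture-avoiding substitution of s for the de Bruijn index d. -/
def subst (d : ℕ) (s : Lam) : Lam → Lam
  | var n => if n = d then s else if n < d then var n else var (n - 1)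
  | app u v => app (subst d s u) (subst d s v)
  | lam u => lam (subst (d + 1) (lift 0 s) u)

/-- One-step β-reduction. -/
inductive Step : Lam → Lam → Prop
  | beta (u v : Lam) : Step (app (lam u) v) (subst 0 v u)
  | appL {u u' : Lam} (v : Lam) : Step u u' → Step (app u v) (app u' v)
  | appR (u : Lam) {v v' : Lam} : Step v v' → Step (app u v) (app u v')
  | lam {u u' : Lam} : Step u u' → Step (lam u) (lam u')

/-- β-equivalence: the reflexive-symmetric-transitive closure of β-reduction. -/
inductive BetaEq : Lam → Lam → Prop
  | step {u v} : Step u v → BetaEq u v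
  | refl (u) : BetaEq u u
  | symm {u v} : BetaEq u v → BetaEq v u
  | trans {u v w} : BetaEq u v → BetaEq v w → BetaEq u w

/-- One step of head reduction: contract the head redex. -/
inductive HeadStep : Lam → Lam → Prop
  | beta (u v : Lam) : HeadStep (app (lam u) v) (subst 0 v u)
  | appL {u u' : Lam} (v : Lam) : HeadStep u u' → (∀ w, u ≠ lam w) →
      HeadStep (app u v) (app u' v)
  | lam {u u' : Lam} : HeadStep u u' → HeadStep (lam u) (lam u')

/-- `Heads u v`: u head-reduces to v in finitely many steps. -/
def Heads : Lam → Lam → Prop := Relation.ReflTransGen HeadStep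

/-- A term is normal if it contains no β-redex. -/
def Normal (t : Lam) : Prop := ∀ u, ¬ Step t u

/-- All free de Bruijn indices of the term are < d. -/
def ClosedUnder : ℕ → Lam → Prop
  | d, var n => n < d
  | d, app u v => ClosedUnder d u ∧ ClosedUnder d v
  | d, lam u => ClosedUnder (d + 1) u

/-- A term is closed if it has no free variables. -/
def Closed (t : Lam) : Prop := ClosedUnder 0 t

/-- The de Bruijn index i occurs free in the term. -/
def FreeIn : ℕ → Lam → Prop
  | i, var n => n = i
  | i, app u v => FreeIn i u ∨ FreeIn i v
  | i, lam u => FreeIn (i + 1) u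

/-- n-fold application: (f^n x). -/
def iterApp : ℕ → Lam → Lam → Lam
  | 0, _, x => x
  | n + 1, f, x => app f (iterApp n f x)

/-- The n-th Church numeral λx.λf.(f^n x). -/
def church (n : ℕ) : Lam := lam (lam (iterApp n (var 0) (var 1)))

/-- T = λx.λy.x -/
def Ttm : Lam := lam (lam (var 1))

/-- F = λx.λy.y -/
def Ftm : Lam := lam (lam (var 0))

end Lam

namespace Lam

/-- Terms of the form (x v₁ … vₘ). -/
inductive NeutralHNF : Lam → Prop
  | var (n : ℕ) : NeutralHNF (var n)
  | app {u : Lam} (v : Lam) : NeutralHNF u → NeutralHNF (app u v)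

/-- Head normal forms: λx₁…λxₙ.(x v₁ … vₘ). -/
inductive HNF : Lam → Prop
  | of {u : Lam} : NeutralHNF u → HNF u
  | lam {u : Lam} : HNF u → HNF (lam u)

/-! By Church–Rosser (Tait–Martin-Löf parallel reduction with Takahashi's complete development),
`t` and `h` have a common reduct `k`, and `k` is a head normal form because β-steps never create a
head redex in one. By standardization in Kashima's form, `t →β* k` implies that `t` weak-head
reduces to a term with the outermost constructor of `k` whose immediate subterms reduce to those of
`k`; following the abstraction prefix and the applicative spine of `k`, this yields a head
reduction from `t` to a head normal form. -/

open Relation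

theorem lift_lift (t : Lam) {i j : ℕ} (h : i ≤ j) :
    lift i (lift j t) = lift (j + 1) (lift i t) := by
  induction t generalizing i j with
  | var n => grind [lift]
  | app u v ihu ihv => simp [lift, ihu h, ihv h]
  | lam u ih => simp [lift, ih (Nat.succ_le_succ h)]

theorem subst_lift (t : Lam) (d : ℕ) (s : Lam) : subst d s (lift d t) = t := by
  induction t generalizing d s with
  | var n => grind [lift, subst]
  | app u v ihu ihv => simp [lift, subst, ihu, ihv]
  | lam u ih => simp [lift, subst, ih]

theorem lift_subst_of_le (t : Lam) {i d : ℕ} (s : Lam) (h : i ≤ d) :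
    lift i (subst d s t) = subst (d + 1) (lift i s) (lift i t) := by
  induction t generalizing i d s with
  | var n => grind [lift, subst]
  | app u v ihu ihv => simp [lift, subst, ihu _ h, ihv _ h]
  | lam u ih =>
    simp only [lift, subst, ih _ (Nat.succ_le_succ h), lift_lift s (Nat.zero_le i)]

theorem lift_subst_of_ge (t : Lam) {i d : ℕ} (s : Lam) (h : d ≤ i) :
    lift i (subst d s t) = subst d (lift i s) (lift (i + 1) t) := by
  induction t generalizing i d s with
  | var n => grind [lift, subst]
  | app u v ihu ihv => simp [lift, subst, ihu _ h, ihv _ h]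
  | lam u ih =>
    simp only [lift, subst, ih _ (Nat.succ_le_succ h), lift_lift s (Nat.zero_le i)]

theorem subst_subst (t : Lam) {i d : ℕ} (s v : Lam) (h : i ≤ d) :
    subst d s (subst i v t) = subst i (subst d s v) (subst (d + 1) (lift i s) t) := by
  induction t generalizing i d s v with
  | var n => grind [lift, subst, subst_lift]
  | app u w ihu ihw => simp [subst, ihu _ _ h, ihw _ _ h]
  | lam u ih =>
    simp only [subst, ih _ _ (Nat.succ_le_succ h), lift_lift s (Nat.zero_le i),
      lift_subst_of_le v s (Nat.zero_le d)]

def Steps : Lam → Lam → Prop := ReflTransGen Step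

theorem Steps.appL {u u' : Lam} (v : Lam) (h : Steps u u') : Steps (app u v) (app u' v) :=
  h.lift (app · v) fun _ _ => Step.appL v

theorem Steps.appR (u : Lam) {v v' : Lam} (h : Steps v v') : Steps (app u v) (app u v') :=
  h.lift (app u) fun _ _ => Step.appR u

theorem Steps.lam {u u' : Lam} (h : Steps u u') : Steps (lam u) (lam u') :=
  h.lift Lam.lam fun _ _ => Step.lam

inductive Par : Lam → Lam → Prop
  | var (n : ℕ) : Par (var n) (var n)
  | app {u u' v v' : Lam} : Par u u' → Par v v' → Par (app u v) (app u' v')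
  | lam {u u' : Lam} : Par u u' → Par (lam u) (lam u')
  | beta {u u' v v' : Lam} : Par u u' → Par v v' → Par (app (lam u) v) (subst 0 v' u')

theorem Par.refl (t : Lam) : Par t t := by
  induction t with
  | var n => exact .var n
  | app u v ihu ihv => exact .app ihu ihv
  | lam u ih => exact .lam ih

theorem Par.of_step {t u : Lam} (h : Step t u) : Par t u := by
  induction h with
  | beta a b => exact .beta (.refl a) (.refl b)
  | appL v _ ih => exact .app ih (.refl v)
  | appR u _ ih => exact .app (.refl u) ih
  | lam _ ih => exact .lam ih

theorem Par.steps {t u : Lam} (h : Par t u) : Steps t u := by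
  induction h with
  | var n => exact .refl
  | app _ _ ihu ihv => exact (ihu.appL _).trans (ihv.appR _)
  | lam _ ih => exact ih.lam
  | beta _ _ ihu ihv => exact (ihu.lam.appL _ |>.trans (ihv.appR _)).tail (.beta _ _)

theorem Par.lift {t t' : Lam} (h : Par t t') (d : ℕ) : Par (Lam.lift d t) (Lam.lift d t') := by
  induction h generalizing d with
  | var n => exact .refl _
  | app _ _ ihu ihv => exact .app (ihu d) (ihv d)
  | lam _ ih => exact .lam (ih (d + 1))
  | beta _ _ ihu ihv =>
    rw [Lam.lift, Lam.lift, lift_subst_of_ge _ _ (Nat.zero_le d)]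
    exact .beta (ihu (d + 1)) (ihv d)

theorem Par.subst {t t' s s' : Lam} (h : Par t t') (hs : Par s s') (d : ℕ) :
    Par (Lam.subst d s t) (Lam.subst d s' t') := by
  induction h generalizing d s s' with
  | var n => simp only [Lam.subst]; split_ifs <;> first | exact hs | exact .refl _
  | app _ _ ihu ihv => exact .app (ihu hs d) (ihv hs d)
  | lam _ ih => exact .lam (ih (hs.lift 0) (d + 1))
  | beta _ _ ihu ihv =>
    rw [Lam.subst, Lam.subst, subst_subst _ _ _ (Nat.zero_le d)]
    exact .beta (ihu (hs.lift 0) (d + 1)) (ihv hs d)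

def develop : Lam → Lam
  | var n => var n
  | lam u => lam (develop u)
  | app (lam u) v => subst 0 (develop v) (develop u)
  | app (var n) v => app (var n) (develop v)
  | app (app a b) v => app (develop (app a b)) (develop v)

theorem Par.develop {t u : Lam} (h : Par t u) : Par u (develop t) := by
  induction h with
  | var n => exact .var n
  | lam _ ih => exact .lam ih
  | beta _ _ ihu ihv => exact ihu.subst ihv 0
  | app hu _ ihu ihv =>
    cases hu with
    | var n => exact .app ihu ihv
    | app _ _ => exact .app ihu ihv
    | beta _ _ => exact .app ihu ihv
    | lam _ => cases ihu with | lam ih => exact .beta ih ihv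

theorem reflTransGen_par_eq_steps : ReflTransGen Par = Steps := by
  ext t u
  exact ⟨fun h => h.lift' id fun _ _ => Par.steps,
    fun h => ReflTransGen.mono (fun _ _ => Par.of_step) t u h⟩

theorem BetaEq.join_steps {t u : Lam} (he : BetaEq t u) : Join Steps t u := by
  have hequiv : Equivalence (Join Steps) := reflTransGen_par_eq_steps ▸
    equivalence_join_reflTransGen fun t _ _ hu hv =>
      ⟨develop t, .single hu.develop, .single hv.develop⟩
  induction he with
  | step hs => exact ⟨_, .single hs, .refl⟩
  | refl u => exact hequiv.refl u
  | symm _ ih => exact hequiv.symm ih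
  | trans _ _ ih₁ ih₂ => exact hequiv.trans ih₁ ih₂

theorem NeutralHNF.ne_lam {u : Lam} (h : NeutralHNF u) (w : Lam) : u ≠ lam w := by
  cases h <;> nofun

theorem NeutralHNF.step {u u' : Lam} (h : NeutralHNF u) (hs : Step u u') : NeutralHNF u' := by
  induction hs with
  | beta a b => cases h with | app _ hn => exact absurd rfl (hn.ne_lam a)
  | appL v _ ih => cases h with | app _ hn => exact .app _ (ih hn)
  | appR u _ => cases h with | app _ hn => exact .app _ hn
  | lam _ => cases h

theorem HNF.step {u u' : Lam} (h : HNF u) (hs : Step u u') : HNF u' := by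
  induction h generalizing u' with
  | of hn => exact .of (hn.step hs)
  | lam _ ih => cases hs with | lam hs => exact .lam (ih hs)

theorem HNF.steps {u u' : Lam} (h : HNF u) (hs : Steps u u') : HNF u' := by
  induction hs with
  | refl => exact h
  | tail _ hs ih => exact ih.step hs

theorem NeutralHNF.not_headStep {u : Lam} (h : NeutralHNF u) (w : Lam) : ¬ HeadStep u w := by
  induction h generalizing w with
  | var n => nofun
  | app v hn ih =>
    rintro (⟨a, _⟩ | ⟨_, hs, _⟩)
    · exact hn.ne_lam a rfl
    · exact ih _ hs

theorem HNF.not_headStep {u : Lam} (h : HNF u) (w : Lam) : ¬ HeadStep u w := by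
  induction h generalizing w with
  | of hn => exact hn.not_headStep w
  | lam _ ih => intro hs; cases hs with | lam hs => exact ih _ hs

inductive WeakHeadStep : Lam → Lam → Prop
  | beta (u v : Lam) : WeakHeadStep (app (lam u) v) (subst 0 v u)
  | appL {u u' : Lam} (v : Lam) : WeakHeadStep u u' → WeakHeadStep (app u v) (app u' v)

def WeakHeads : Lam → Lam → Prop := ReflTransGen WeakHeadStep

theorem WeakHeadStep.ne_lam {u u' : Lam} (h : WeakHeadStep u u') (w : Lam) : u ≠ lam w := by
  cases h <;> nofun

theorem WeakHeadStep.headStep {u u' : Lam} (h : WeakHeadStep u u') : HeadStep u u' := by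
  induction h with
  | beta u v => exact .beta u v
  | appL v hs ih => exact .appL v ih hs.ne_lam

theorem WeakHeads.heads {u u' : Lam} (h : WeakHeads u u') : Heads u u' :=
  ReflTransGen.mono (fun _ _ => WeakHeadStep.headStep) u u' h

theorem WeakHeadStep.lift {u u' : Lam} (h : WeakHeadStep u u') (d : ℕ) :
    WeakHeadStep (Lam.lift d u) (Lam.lift d u') := by
  induction h generalizing d with
  | beta u v =>
    rw [Lam.lift, Lam.lift, lift_subst_of_ge _ _ (Nat.zero_le d)]
    exact .beta _ _
  | appL v _ ih => exact .appL _ (ih d)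

theorem WeakHeadStep.subst {u u' : Lam} (h : WeakHeadStep u u') (d : ℕ) (s : Lam) :
    WeakHeadStep (Lam.subst d s u) (Lam.subst d s u') := by
  induction h generalizing d s with
  | beta u v =>
    rw [Lam.subst, Lam.subst, subst_subst _ _ _ (Nat.zero_le d)]
    exact .beta _ _
  | appL v _ ih => exact .appL _ (ih d s)

theorem WeakHeads.lift {u u' : Lam} (h : WeakHeads u u') (d : ℕ) :
    WeakHeads (Lam.lift d u) (Lam.lift d u') :=
  ReflTransGen.lift (Lam.lift d) (fun _ _ hs => hs.lift d) u u' h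

theorem WeakHeads.subst {u u' : Lam} (h : WeakHeads u u') (d : ℕ) (s : Lam) :
    WeakHeads (Lam.subst d s u) (Lam.subst d s u') :=
  ReflTransGen.lift (Lam.subst d s) (fun _ _ hs => hs.subst d s) u u' h

theorem WeakHeads.appL {u u' : Lam} (v : Lam) (h : WeakHeads u u') :
    WeakHeads (app u v) (app u' v) :=
  ReflTransGen.lift (app · v) (fun _ _ => WeakHeadStep.appL v) u u' h

/-- Kashima's standard reduction: `m` weak-head reduces to a term with the outermost constructor
of `n`, whose immediate subterms standard-reduce to those of `n`. -/
inductive StdRed : Lam → Lam → Prop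
  | var {m : Lam} {n : ℕ} : WeakHeads m (var n) → StdRed m (var n)
  | lam {m m' n' : Lam} : WeakHeads m (lam m') → StdRed m' n' → StdRed m (lam n')
  | app {m m₁ m₂ n₁ n₂ : Lam} : WeakHeads m (app m₁ m₂) → StdRed m₁ n₁ → StdRed m₂ n₂ →
      StdRed m (app n₁ n₂)

theorem StdRed.head {m m' n : Lam} (h : WeakHeads m m') (hs : StdRed m' n) : StdRed m n := by
  cases hs with
  | var h' => exact .var (h.trans h')
  | lam h' hs' => exact .lam (h.trans h') hs'
  | app h' hs₁ hs₂ => exact .app (h.trans h') hs₁ hs₂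

theorem StdRed.refl (t : Lam) : StdRed t t := by
  induction t with
  | var n => exact .var .refl
  | app u v ihu ihv => exact .app .refl ihu ihv
  | lam u ih => exact .lam .refl ih

theorem StdRed.lift {m n : Lam} (h : StdRed m n) (d : ℕ) :
    StdRed (Lam.lift d m) (Lam.lift d n) := by
  induction h generalizing d with
  | var h =>
    have h' := h.lift d
    simp only [Lam.lift] at h' ⊢
    split_ifs at h' ⊢ <;> exact .var h'
  | lam h _ ih => exact .lam (h.lift d) (ih (d + 1))
  | app h _ _ ih₁ ih₂ => exact .app (h.lift d) (ih₁ d) (ih₂ d)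

theorem StdRed.subst {m n p q : Lam} (h : StdRed m n) (hpq : StdRed p q) (d : ℕ) :
    StdRed (Lam.subst d p m) (Lam.subst d q n) := by
  induction h generalizing d p q with
  | var h =>
    refine .head (h.subst d p) ?_
    simp only [Lam.subst]
    split_ifs
    · exact hpq
    all_goals exact .refl _
  | lam h _ ih => exact .lam (h.subst d p) (ih (hpq.lift 0) (d + 1))
  | app h _ _ ih₁ ih₂ => exact .app (h.subst d p) (ih₁ hpq d) (ih₂ hpq d)

theorem StdRed.tail {m n n' : Lam} (h : StdRed m n) (hs : Step n n') : StdRed m n' := by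
  induction hs generalizing m with
  | beta a b =>
    cases h with
    | app hm hm₁ hm₂ =>
      -- `m` reaches the contracted redex by weak head reduction; `StdRed` is substitutive
      cases hm₁ with
      | lam hm₁ ha => exact .head (hm.trans ((hm₁.appL _).tail (.beta _ _))) (ha.subst hm₂ 0)
  | appL v _ ih => cases h with | app hm hm₁ hm₂ => exact .app hm (ih hm₁) hm₂
  | appR u _ ih => cases h with | app hm hm₁ hm₂ => exact .app hm hm₁ (ih hm₂)
  | lam _ ih => cases h with | lam hm hm' => exact .lam hm (ih hm')

theorem StdRed.of_steps {m n : Lam} (h : Steps m n) : StdRed m n := by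
  induction h with
  | refl => exact .refl m
  | tail _ hs ih => exact ih.tail hs

theorem StdRed.exists_weakHeads_neutralHNF {m n : Lam} (h : StdRed m n) (hn : NeutralHNF n) :
    ∃ p, WeakHeads m p ∧ NeutralHNF p := by
  induction hn generalizing m with
  | var k =>
    cases h with | var hm => exact ⟨_, hm, .var k⟩
  | app v _ ih =>
    cases h with
    | app hm hm₁ _ =>
      obtain ⟨p, hp, hpn⟩ := ih hm₁
      exact ⟨Lam.app p _, hm.trans (hp.appL _), .app _ hpn⟩

theorem StdRed.exists_heads_hnf {m n : Lam} (h : StdRed m n) (hn : HNF n) :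
    ∃ p, Heads m p ∧ HNF p := by
  induction hn generalizing m with
  | of hn =>
    obtain ⟨p, hp, hpn⟩ := h.exists_weakHeads_neutralHNF hn
    exact ⟨p, hp.heads, .of hpn⟩
  | lam _ ih =>
    cases h with
    | lam hm hm' =>
      obtain ⟨p, hp, hpn⟩ := ih hm'
      exact ⟨Lam.lam p, hm.heads.trans (hp.lift Lam.lam fun _ _ => HeadStep.lam), .lam hpn⟩

/-- A term β-equivalent to a head normal form is solvable: its head
reduction terminates. -/
theorem solvable_of_betaEq_hnf {t h : Lam} (he : BetaEq t h) (hh : HNF h) :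
    ∃ h' : Lam, Heads t h' ∧ ∀ w, ¬ HeadStep h' w := by
  obtain ⟨k, htk, hhk⟩ := he.join_steps
  obtain ⟨h', hth', hh'⟩ := (StdRed.of_steps htk).exists_heads_hnf (hh.steps hhk)
  exact ⟨h', hth', hh'.not_headStep⟩

end Lam
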